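/- Let Π be a family of deterministic stopping policies (functions List O → Bool) whose VC dimension, as Boolean classifiers on List O, is at most d, with d ≥ 1, and let g : List O → ℝ be a reward function. Let x₁, …, xₙ be n full trajectories of horizon H with n·H ≥ d. Then the number of distinct return vectors { (R_π(x₁), …, R_π(xₙ)) : π ∈ Π } ⊆ ℝⁿ is at most (e·n·H/d)^d. -/

import Mathlib

/-!
The return vector of a policy depends only on which of the `n * H` sample prefixes
`trajPrefix (x i) (t + 1)` it halts on. These halt sets form a family of subsets of
`Fin n × Fin H` of VC dimension at most `d`, because a set of indices shattered by the halt sets is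
mapped injectively onto a set of prefixes shattered by `P`. The Sauer–Shelah lemma bounds the number
of halt sets by `∑_{k ≤ d} (n H).choose k`, which is at most `(e n H / d) ^ d`.
-/

open scoped BigOperators

def trajPrefix {O : Type*} {H : ℕ} (x : Fin H → O) (t : ℕ) : List O :=
  (List.ofFn x).take t

open Classical in
noncomputable def stopTime {O : Type*} (H : ℕ) (π : List O → Bool) (x : Fin H → O) : ℕ :=
  if h : ∃ t, (1 ≤ t ∧ t ≤ H) ∧ π (trajPrefix x t) = true then Nat.find h else H

noncomputable def policyReturn {O : Type*} {H : ℕ} (g : List O → ℝ) (π : List O → Bool)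
    (x : Fin H → O) : ℝ :=
  g (trajPrefix x (stopTime H π x))

def ShattersLists {O : Type*} (P : Set (List O → Bool)) (S : Finset (List O)) : Prop :=
  ∀ f : List O → Bool, ∃ π ∈ P, ∀ l ∈ S, π l = f l

lemma stopTime_congr {O : Type*} {H : ℕ} {π π' : List O → Bool} {x : Fin H → O}
    (h : ∀ t, 1 ≤ t → t ≤ H → π (trajPrefix x t) = π' (trajPrefix x t)) :
    stopTime H π x = stopTime H π' x := by
  have hiff : ∀ {t}, ((1 ≤ t ∧ t ≤ H) ∧ π (trajPrefix x t) = true) ↔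
      ((1 ≤ t ∧ t ≤ H) ∧ π' (trajPrefix x t) = true) := fun {t} =>
    and_congr_right fun ht => by rw [h t ht.1 ht.2]
  unfold stopTime
  split_ifs with hπ hπ' hπ'
  · exact Nat.find_congr' hiff
  · exact absurd (hπ.imp fun _ => hiff.1) hπ'
  · exact absurd (hπ'.imp fun _ => hiff.2) hπ
  · rfl

lemma policyReturn_congr {O : Type*} {H : ℕ} (g : List O → ℝ) {π π' : List O → Bool}
    {x : Fin H → O} (h : ∀ t, 1 ≤ t → t ≤ H → π (trajPrefix x t) = π' (trajPrefix x t)) :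
    policyReturn g π x = policyReturn g π' x := by
  rw [policyReturn, policyReturn, stopTime_congr h]

lemma Function.FactorsThrough.ncard_image_le {α β γ : Type*} [Nonempty γ] {f : α → β}
    {g : α → γ} (hgf : g.FactorsThrough f) (s : Set α) (hs : (f '' s).Finite) :
    (g '' s).ncard ≤ (f '' s).ncard := by
  obtain ⟨e, rfl⟩ := (Function.factorsThrough_iff g).1 hgf
  rw [Set.image_comp]
  exact Set.ncard_image_le hs

lemma sum_choose_Iic_le_exp_mul_div_pow {m d : ℕ} (hdm : d ≤ m) :
    ∑ k ∈ Finset.Iic d, (m.choose k : ℝ) ≤ (Real.exp 1 * m / d) ^ d := by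
  rcases Nat.eq_zero_or_pos d with rfl | hd
  · rw [← Nat.bot_eq_zero, Finset.Iic_bot]
    simp
  have hm : (0 : ℝ) < m := by exact_mod_cast hd.trans_le hdm
  set s : ℝ := d / m with hs
  have hs0 : 0 < s := by positivity
  have hs1 : s ≤ 1 := (div_le_one hm).2 (by exact_mod_cast hdm)
  -- Weighting the `k`-th term by `s ^ k ≥ s ^ d` turns the truncated sum into a binomial expansion.
  have key : (∑ k ∈ Finset.Iic d, (m.choose k : ℝ)) * s ^ d ≤ Real.exp 1 ^ d :=
    calc (∑ k ∈ Finset.Iic d, (m.choose k : ℝ)) * s ^ d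
        ≤ ∑ k ∈ Finset.Iic d, s ^ k * 1 ^ (m - k) * m.choose k := by
          rw [Finset.sum_mul]
          refine Finset.sum_le_sum fun k hk => ?_
          rw [one_pow, mul_one, mul_comm]
          exact mul_le_mul_of_nonneg_right
            (pow_le_pow_of_le_one hs0.le hs1 (Finset.mem_Iic.1 hk)) (by positivity)
      _ ≤ ∑ k ∈ Finset.range (m + 1), s ^ k * 1 ^ (m - k) * m.choose k := by
          refine Finset.sum_le_sum_of_subset_of_nonneg (fun k hk => ?_) fun k _ _ => by positivity
          simp only [Finset.mem_Iic, Finset.mem_range] at hk ⊢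
          omega
      _ = (s + 1) ^ m := (add_pow s 1 m).symm
      _ ≤ Real.exp s ^ m := by gcongr; linarith [Real.add_one_le_exp s]
      _ = Real.exp 1 ^ d := by
          rw [← Real.exp_nat_mul, ← Real.exp_nat_mul, hs, mul_div_cancel₀ _ hm.ne', mul_one]
  calc ∑ k ∈ Finset.Iic d, (m.choose k : ℝ) ≤ Real.exp 1 ^ d / s ^ d :=
        (le_div_iff₀ (by positivity)).2 key
    _ = (Real.exp 1 * m / d) ^ d := by rw [← div_pow, hs, div_div_eq_mul_div]

section HaltSet

variable {O ι : Type*} [Fintype ι]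

def haltSet (e : ι → List O) (π : List O → Bool) : Finset ι :=
  Finset.univ.filter fun i => π (e i) = true

noncomputable def haltSets (e : ι → List O) (P : Set (List O → Bool)) : Finset (Finset ι) :=
  (Set.toFinite (haltSet e '' P)).toFinset

lemma mem_haltSet {e : ι → List O} {π : List O → Bool} {i : ι} :
    i ∈ haltSet e π ↔ π (e i) = true := by
  simp [haltSet]

lemma mem_haltSets {e : ι → List O} {P : Set (List O → Bool)} {u : Finset ι} :
    u ∈ haltSets e P ↔ ∃ π ∈ P, haltSet e π = u := by
  simp [haltSets]

lemma apply_eq_of_haltSet_eq {e : ι → List O} {π π' : List O → Bool}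
    (h : haltSet e π = haltSet e π') (i : ι) : π (e i) = π' (e i) :=
  Bool.eq_iff_iff.2 (by simpa only [mem_haltSet] using Finset.ext_iff.1 h i)

variable [DecidableEq ι] {e : ι → List O} {P : Set (List O → Bool)} {s : Finset ι}

lemma Finset.Shatters.injOn_of_haltSets (hs : (haltSets e P).Shatters s) : Set.InjOn e s := by
  intro i hi j hj hij
  obtain ⟨u, hu, hsu⟩ := hs (Finset.singleton_subset_iff.2 hi)
  obtain ⟨π, -, rfl⟩ := mem_haltSets.1 hu
  have hπi : π (e i) = true :=
    mem_haltSet.1 (Finset.mem_inter.1 (hsu ▸ Finset.mem_singleton_self i)).2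
  have hj' : j ∈ s ∩ haltSet e π := Finset.mem_inter.2 ⟨hj, mem_haltSet.2 (hij ▸ hπi)⟩
  rw [hsu, Finset.mem_singleton] at hj'
  exact hj'.symm

lemma Finset.Shatters.shattersLists_image_of_haltSets [DecidableEq O]
    (hs : (haltSets e P).Shatters s) : ShattersLists P (s.image e) := by
  intro f
  obtain ⟨u, hu, hsu⟩ := hs (Finset.filter_subset (fun i => f (e i) = true) s)
  obtain ⟨π, hπ, rfl⟩ := mem_haltSets.1 hu
  refine ⟨π, hπ, ?_⟩
  simp only [Finset.mem_image, forall_exists_index, and_imp]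
  rintro _ i hi rfl
  have hiff := Finset.ext_iff.1 hsu i
  simp only [Finset.mem_inter, mem_haltSet, Finset.mem_filter, hi, true_and] at hiff
  exact Bool.eq_iff_iff.2 hiff

lemma vcDim_haltSets_le {d : ℕ}
    (hVC : ∀ S : Finset (List O), S.card = d + 1 → ¬ ShattersLists P S) (e : ι → List O) :
    (haltSets e P).vcDim ≤ d := by
  classical
  refine Finset.sup_le fun s hs => ?_
  by_contra! hlt
  obtain ⟨t, hts, ht⟩ := Finset.exists_subset_card_eq (show d + 1 ≤ s.card by omega)
  have hshat := (Finset.mem_shatterer.1 hs).mono_right hts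
  exact hVC (t.image e) (by rw [Finset.card_image_of_injOn hshat.injOn_of_haltSets, ht])
    hshat.shattersLists_image_of_haltSets

lemma card_haltSets_le {d : ℕ}
    (hVC : ∀ S : Finset (List O), S.card = d + 1 → ¬ ShattersLists P S) (e : ι → List O) :
    (haltSets e P).card ≤ ∑ k ∈ Finset.Iic d, (Fintype.card ι).choose k :=
  calc (haltSets e P).card ≤ (haltSets e P).shatterer.card := Finset.card_le_card_shatterer _
    _ ≤ ∑ k ∈ Finset.Iic (haltSets e P).vcDim, (Fintype.card ι).choose k :=
        Finset.card_shatterer_le_sum_vcDim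
    _ ≤ ∑ k ∈ Finset.Iic d, (Fintype.card ι).choose k :=
        Finset.sum_le_sum_of_subset (Finset.Iic_subset_Iic.2 (vcDim_haltSets_le hVC e))

end HaltSet

theorem return_vectors_card_le_general {O : Type*} {H n d : ℕ}
    (P : Set (List O → Bool))
    (hVC : ∀ S : Finset (List O), S.card = d + 1 → ¬ ShattersLists P S)
    (g : List O → ℝ)
    (x : Fin n → (Fin H → O)) (hnH : d ≤ n * H) :
    ((Set.ncard {v : Fin n → ℝ | ∃ π ∈ P, v = fun i => policyReturn g π (x i)} : ℝ))
      ≤ (Real.exp 1 * n * H / d) ^ d := by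
  let e : Fin n × Fin H → List O := fun p => trajPrefix (x p.1) (p.2 + 1)
  have hfactor : (fun π => fun i => policyReturn g π (x i)).FactorsThrough (haltSet e) := by
    intro π π' h
    funext i
    refine policyReturn_congr g fun t ht1 htH => ?_
    obtain ⟨t, rfl⟩ : ∃ k, t = k + 1 := ⟨t - 1, by omega⟩
    exact apply_eq_of_haltSet_eq h (i, ⟨t, by omega⟩)
  have hvectors : {v : Fin n → ℝ | ∃ π ∈ P, v = fun i => policyReturn g π (x i)} =
      (fun π => fun i => policyReturn g π (x i)) '' P := by
    ext v
    simp [eq_comm]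
  have hcard : (haltSet e '' P).ncard = (haltSets e P).card := by
    rw [← Set.ncard_coe_finset, haltSets, Set.Finite.coe_toFinset]
  calc ((Set.ncard {v : Fin n → ℝ | ∃ π ∈ P, v = fun i => policyReturn g π (x i)} : ℝ))
      ≤ (haltSets e P).card := by
        rw [hvectors, ← hcard]
        exact_mod_cast hfactor.ncard_image_le P (Set.toFinite _)
    _ ≤ ∑ k ∈ Finset.Iic d, ((n * H).choose k : ℝ) := by
        have := card_haltSets_le hVC e
        rw [Fintype.card_prod, Fintype.card_fin, Fintype.card_fin] at this
        exact_mod_cast this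
    _ ≤ (Real.exp 1 * n * H / d) ^ d := by
        simpa [mul_assoc] using sum_choose_Iic_le_exp_mul_div_pow hnH

/-- The number of distinct return vectors produced by a VC-dimension-`d` policy class
on `n` full trajectories of horizon `H` is at most `(e·n·H/d)^d`. -/
theorem return_vectors_card_le {O : Type*} {H n d : ℕ} (hH : 1 ≤ H) (hd : 1 ≤ d)
    (P : Set (List O → Bool))
    (hVC : ∀ S : Finset (List O), S.card = d + 1 → ¬ ShattersLists P S)
    (g : List O → ℝ)
    (x : Fin n → (Fin H → O)) (hnH : d ≤ n * H) :
    ((Set.ncard {v : Fin n → ℝ | ∃ π ∈ P, v = fun i => policyReturn g π (x i)} : ℝ))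
      ≤ (Real.exp 1 * n * H / d) ^ d :=
  return_vectors_card_le_general P hVC g x hnH
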